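/- Let K be a compact topological group with Haar probability measure m and let U ⊆ K be an open set for which there exists a finite set F ⊆ K with F·U = K. Then there exists an open m-Jordan measurable subset U' ⊆ U (i.e., m(∂U') = 0) such that F·U' = K. -/

import Mathlib

open MeasureTheory Set
open scoped Pointwise

/-!
A topological group is completely regular, so for `x ∈ U` there is a continuous
`f : K → [0, 1]` with `f x = 0` and `f = 1` off `U`. The open sets
`{f < t}` have pairwise disjoint frontiers inside the level sets `{f = t}`, so all but countably
many of them have null frontier; hence `U` is a union of open sets with null frontier.
The translates of these by `F` form an open cover of the compact group, and the union of the
finitely many sets appearing in a finite subcover is the required `U'`.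
-/

theorem IsTopologicalGroup.completelyRegularSpace (G : Type*) [Group G] [TopologicalSpace G]
    [IsTopologicalGroup G] : CompletelyRegularSpace G :=
  letI := IsTopologicalGroup.rightUniformSpace G
  inferInstance

theorem Measurable.exists_mem_Ioo_measure_preimage_singleton_eq_zero {X : Type*}
    [MeasurableSpace X] (μ : Measure X) [SFinite μ] {f : X → ℝ} (hf : Measurable f) {a b : ℝ}
    (hab : a < b) : ∃ t ∈ Ioo a b, μ (f ⁻¹' {t}) = 0 := by
  obtain ⟨t, ht, htab⟩ :=
    ((Measure.countable_meas_level_set_pos (μ := μ) hf).dense_compl ℝ).exists_between hab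
  exact ⟨t, htab, nonpos_iff_eq_zero.mp (not_lt.mp ht)⟩

theorem IsOpen.exists_isOpen_mem_subset_measure_frontier_eq_zero {X : Type*} [TopologicalSpace X]
    [CompletelyRegularSpace X] [MeasurableSpace X] [OpensMeasurableSpace X] (μ : Measure X)
    [SFinite μ] {U : Set X} (hU : IsOpen U) {x : X} (hx : x ∈ U) :
    ∃ V, IsOpen V ∧ x ∈ V ∧ V ⊆ U ∧ μ (frontier V) = 0 := by
  obtain ⟨f, hf, hfx, hfU⟩ := CompletelyRegularSpace.completely_regular_isOpen x U hU hx
  have hg : Continuous fun y ↦ (f y : ℝ) := continuous_subtype_val.comp hf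
  obtain ⟨t, ⟨ht0, ht1⟩, ht⟩ :=
    hg.measurable.exists_mem_Ioo_measure_preimage_singleton_eq_zero μ zero_lt_one
  refine ⟨{y | (f y : ℝ) < t}, isOpen_lt hg continuous_const, by simpa [hfx] using ht0,
    fun y hy ↦ ?_, measure_mono_null ?_ ht⟩
  · by_contra hyU
    have : (f y : ℝ) = 1 := by simp [hfU hyU]
    exact (hy.trans ht1).ne this
  · exact (frontier_lt_subset_eq hg continuous_const).trans fun y hy ↦ hy

theorem exists_finset_mul_biUnion_eq_univ {G ι : Type*} [Group G] [TopologicalSpace G]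
    [ContinuousConstSMul G G] [CompactSpace G] {F : Set G} {V : ι → Set G}
    (hV : ∀ i, IsOpen (V i)) (hF : F * ⋃ i, V i = univ) :
    ∃ s : Finset ι, F * ⋃ i ∈ s, V i = univ := by
  rw [mul_iUnion] at hF
  obtain ⟨s, hs⟩ := isCompact_univ.elim_finite_subcover (fun i ↦ F * V i)
    (fun i ↦ (hV i).mul_left) hF.ge
  exact ⟨s, by rw [mul_iUnion₂]; exact univ_subset_iff.mp hs⟩

theorem Finset.frontier_biUnion_subset {X ι : Type*} [TopologicalSpace X] (s : Finset ι)
    (f : ι → Set X) : frontier (⋃ i ∈ s, f i) ⊆ ⋃ i ∈ s, frontier (f i) := by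
  rintro x ⟨hx_closure, hx_interior⟩
  rw [Finset.closure_biUnion, mem_iUnion₂] at hx_closure
  obtain ⟨i, hi, hx⟩ := hx_closure
  exact mem_iUnion₂.mpr
    ⟨i, hi, hx, fun h ↦ hx_interior (interior_mono (Set.subset_biUnion_of_mem hi) h)⟩

theorem stmt5_general {K : Type*} [Group K] [TopologicalSpace K] [IsTopologicalGroup K]
    [CompactSpace K] [MeasurableSpace K] [BorelSpace K]
    (m : Measure K) [IsProbabilityMeasure m]
    (U : Set K) (hU : IsOpen U) (F : Finset K) (hF : (F : Set K) * U = Set.univ) :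
    ∃ U' : Set K, U' ⊆ U ∧ IsOpen U' ∧ m (frontier U') = 0 ∧
      (F : Set K) * U' = Set.univ := by
  have := IsTopologicalGroup.completelyRegularSpace K
  choose V hV_open hxV hVU hV_null using
    fun x : U ↦ hU.exists_isOpen_mem_subset_measure_frontier_eq_zero m x.2
  have hU_eq : ⋃ x, V x = U :=
    (iUnion_subset hVU).antisymm fun x hx ↦ mem_iUnion.mpr ⟨⟨x, hx⟩, hxV _⟩
  obtain ⟨s, hs⟩ := exists_finset_mul_biUnion_eq_univ hV_open (hU_eq ▸ hF)
  refine ⟨⋃ x ∈ s, V x, iUnion₂_subset fun x _ ↦ hVU x, isOpen_biUnion fun x _ ↦ hV_open x,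
    measure_mono_null (s.frontier_biUnion_subset V) ?_, hs⟩
  exact (measure_biUnion_null_iff s.countable_toSet).mpr fun x _ ↦ hV_null x

/-- If finitely many translates of an open set `U` cover a compact group `K`, then `U` contains
an open Jordan measurable subset `U'` whose translates by the same finite set cover `K`. -/
theorem stmt5 {K : Type*} [Group K] [TopologicalSpace K] [IsTopologicalGroup K]
    [CompactSpace K] [T2Space K] [MeasurableSpace K] [BorelSpace K]
    (m : Measure K) [m.IsHaarMeasure] [IsProbabilityMeasure m]
    (U : Set K) (hU : IsOpen U) (F : Finset K) (hF : (F : Set K) * U = Set.univ) :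
    ∃ U' : Set K, U' ⊆ U ∧ IsOpen U' ∧ m (frontier U') = 0 ∧
      (F : Set K) * U' = Set.univ :=
  stmt5_general m U hU F hF
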